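/- arXiv:1907.11967 — 2 statements merged into one kernel-verified Lean document; each statement's English description precedes it below -/
import Mathlib

section
/- One has ε_0=1 and, for every n≥0, ε_{n+1}=ε_n(𝜀̄_n)^+, i.e., the word ε_{n+1} is the concatenation of ε_n with the reflection of ε_n whose last digit has been increased by 1. -/
open scoped Pointwise ENNReal
open Filter

noncomputable section

/-- The digit set Ω₁ = {(0,0),(0,1),(1,0)} ⊆ ℝ². -/
def Omega1 : Set (ℝ × ℝ) := {((0:ℝ), (0:ℝ)), (0, 1), (1, 0)}

/-- The digit set Ω₂ = Ω₁ − Ω₁ ⊆ ℝ². -/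
def Omega2 : Set (ℝ × ℝ) :=
  {((0:ℝ), (0:ℝ)), (0, 1), (1, 0), (-1, 0), (-1, 1), (0, -1), (1, -1)}

/-- The Sierpinski gasket in base `q`. -/
def gasket (q : ℝ) : Set (ℝ × ℝ) :=
  {x | ∃ c : ℕ → ℝ × ℝ, (∀ i, c i ∈ Omega1) ∧ x = ∑' i, (q ^ (i + 1))⁻¹ • c i}

/-- `U_q`: points of `[-1/(q-1), 1/(q-1)]` having a unique `q`-expansion over `{-1,0,1}`. -/
def uniqSet (q : ℝ) : Set ℝ :=
  {s | s ∈ Set.Icc (-(1 / (q - 1))) (1 / (q - 1)) ∧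
    ∃! t : ℕ → ℝ, (∀ i, t i ∈ ({-1, 0, 1} : Set ℝ)) ∧ s = ∑' i, t i / q ^ (i + 1)}

/-- The set `T`. -/
def Tset (q : ℝ) : Set (ℝ × ℝ) :=
  {t | t ∈ gasket q - gasket q ∧ t.1 ∈ uniqSet q ∧ t.2 ∈ uniqSet q}

/-- The set `D_q` of Hausdorff dimensions of intersections. -/
def Dset (q : ℝ) : Set ℝ≥0∞ :=
  {d | ∃ t ∈ Tset q, d = dimH (gasket q ∩ ((· + t) '' gasket q))}

/-- The words `w_n` over `{0,1,2}`: `klWord 0 = w₁ = 2`,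
`w_{n+1} = (w_n ⟨reflection of w_n⟩)⁺`. -/
def klWord : ℕ → List ℕ
  | 0 => [2]
  | n + 1 =>
    let w := klWord n ++ (klWord n).map (fun x => 2 - x)
    w.dropLast ++ [w.getLast?.getD 0 + 1]

/-- `isKLBase n p`: `p ∈ (2,3)` and `1` has (greedy) expansion `w_n 0^∞` in base `p`
w.r.t. `{0,1,2}`, i.e. `p = q_n`. -/
def isKLBase (n : ℕ) (p : ℝ) : Prop :=
  p ∈ Set.Ioo (2 : ℝ) 3 ∧
    (1 : ℝ) = ∑ i ∈ Finset.range (klWord (n - 1)).length,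
      ((klWord (n - 1)).getD i 0 : ℝ) / p ^ (i + 1)

/-- `1` has a unique expansion in base `p` w.r.t. the digit set `{0,1,2}`. -/
def uniqueOneExp (p : ℝ) : Prop :=
  ∃! c : ℕ → ℕ, (∀ i, c i ≤ 2) ∧ (1 : ℝ) = ∑' i, (c i : ℝ) / p ^ (i + 1)

/-- The Thue–Morse sequence. -/
def tm : ℕ → ℕ
  | 0 => 0
  | n + 1 => if (n + 1) % 2 = 0 then tm ((n + 1) / 2) else 1 - tm ((n + 1) / 2)
decreasing_by all_goals omega

/-- `λ_i = τ_i − τ_{i−1}` (for `i ≥ 1`). -/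
def lam (i : ℕ) : ℤ := (tm i : ℤ) - (tm (i - 1) : ℤ)

/-- The word `ε_n = λ₁ ⋯ λ_{2^n}`. -/
def eps (n : ℕ) : List ℤ := (List.range (2 ^ n)).map fun i => lam (i + 1)

/-- Reflection of a word over `{-1,0,1}`: each digit `x` is replaced by `-x`. -/
def reflect (w : List ℤ) : List ℤ := w.map fun x => -x

/-- `w⁺`: the last digit is increased by `1`. -/
def plusOne (w : List ℤ) : List ℤ := w.dropLast ++ [w.getLast?.getD 0 + 1]

/-- `w⁻`: the last digit is decreased by `1`. -/
def minusOne (w : List ℤ) : List ℤ := w.dropLast ++ [w.getLast?.getD 0 - 1]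

/-- The periodic sequence `w^∞` (the `(j+1)`-st term is `per w j`). -/
def per (w : List ℤ) : ℕ → ℤ := fun j => w.getD (j % w.length) 0

/-- `EndsWith x s`: the sequence `x` ends with (has tail) the sequence `s`. -/
def EndsWith {α : Type*} (x s : ℕ → α) : Prop := ∃ k, ∀ j, x (j + k) = s j

/-- The digit set Ω₂ as a subset of ℤ × ℤ. -/
def Omega2Z : Set (ℤ × ℤ) :=
  {((0:ℤ), (0:ℤ)), (0, 1), (1, 0), (-1, 0), (-1, 1), (0, -1), (1, -1)}

/-- `E_{n,m}^i = (σ^i((ε_n ε̄_n)^∞), (ε_m ε̄_m)^∞)` (the `(j+1)`-st term is `Eseq n m i j`). -/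
def Eseq (n m i : ℕ) : ℕ → ℤ × ℤ := fun j =>
  (per (eps n ++ reflect (eps n)) (j + i), per (eps m ++ reflect (eps m)) j)


/-- `A_k = a₁ ⋯ a_{2^k}` where `a_i = λ_{2i−1}`. -/
def Aword (k : ℕ) : List ℤ := (List.range (2 ^ k)).map fun i => lam (2 * i + 1)

/-- `D_{k,k}^i = (σ^i((A_k Ā_k)^∞), (A_k Ā_k)^∞)`. -/
def Dseq (k i : ℕ) : ℕ → ℤ × ℤ := fun j =>
  (per (Aword k ++ reflect (Aword k)) (j + i), per (Aword k ++ reflect (Aword k)) j)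

/-- `U_q'`: the set of sequences over `{-1,0,1}` which are the unique `q`-expansion
of the number they represent. -/
def uniqSeqSet (q : ℝ) : Set (ℕ → ℤ) :=
  {t | (∀ i, t i ∈ ({-1, 0, 1} : Set ℤ)) ∧
    ∀ s : ℕ → ℤ, (∀ i, s i ∈ ({-1, 0, 1} : Set ℤ)) →
      (∑' i, (s i : ℝ) / q ^ (i + 1)) = (∑' i, (t i : ℝ) / q ^ (i + 1)) → s = t}

/-- `ε_{n-1} ε̄_{n-1}`, with the convention `ε_{-1} ε̄_{-1} := 00`. -/
def epsPair : ℕ → List ℤ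
  | 0 => [0, 0]
  | n + 1 => eps n ++ reflect (eps n)

/-- The finite prefix
`(ε_0 ε̄_0)^{j_0} (ε_0 ε̄_1)^{l_0} ⋯ (ε_{M-1} ε̄_{M-1})^{j_{M-1}} (ε_{M-1} ε̄_M)^{l_{M-1}}`. -/
def blockJL (j l : ℕ → ℕ) : ℕ → List ℤ
  | 0 => []
  | M + 1 => blockJL j l M
      ++ (List.replicate (j M) (eps M ++ reflect (eps M))).flatten
      ++ (List.replicate (l M) (eps M ++ reflect (eps (M + 1)))).flatten

/-- The tail of `t` starting at some position `k` follows the pattern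
`(ε_0 ε̄_0)^{j_0}(ε_0 ε̄_1)^{l_0}(ε_1 ε̄_1)^{j_1}(ε_1 ε̄_2)^{l_1}⋯`. -/
def TailFollows (t : ℕ → ℤ) (j l : ℕ → ℕ) : Prop :=
  ∃ k, ∀ M, ∀ i < (blockJL j l M).length, t (i + k) = (blockJL j l M).getD i 0

/-- As `TailFollows`, but for the reflection of the pattern. -/
def TailFollowsRefl (t : ℕ → ℤ) (j l : ℕ → ℕ) : Prop :=
  ∃ k, ∀ M, ∀ i < (blockJL j l M).length, t (i + k) = -(blockJL j l M).getD i 0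

/-- `a_n = 0 λ₁ ⋯ λ_{2^n−1}`. -/
def aword (n : ℕ) : List ℤ := 0 :: ((List.range (2 ^ n - 1)).map fun i => lam (i + 1))

/-- `b_n = (−1) λ₁ ⋯ λ_{2^n−1}`. -/
def bword (n : ℕ) : List ℤ := (-1) :: ((List.range (2 ^ n - 1)).map fun i => lam (i + 1))

/-- The transitions allowed by the matrix `A` on the alphabet `{a_n, b_n, ā_n, b̄_n}`:
`a→b, a→ā, b→ā, ā→a, ā→b̄, b̄→a`. -/
def allowedTrans (n : ℕ) (u v : List ℤ) : Prop :=
  (u = aword n ∧ (v = bword n ∨ v = reflect (aword n))) ∨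
  (u = bword n ∧ v = reflect (aword n)) ∨
  (u = reflect (aword n) ∧ (v = aword n ∨ v = reflect (bword n))) ∨
  (u = reflect (bword n) ∧ v = aword n)


lemma tm_zero : tm 0 = 0 := by rw [tm]

lemma tm_one : tm 1 = 1 := by rw [tm]; norm_num [tm_zero]

lemma tm_le_one : ∀ i, tm i ≤ 1 := by
  intro i
  induction i using Nat.strong_induction_on with
  | _ i ih =>
    match i with
    | 0 => simp [tm]
    | n + 1 =>
      rw [tm]
      split
      · exact ih _ (by omega)
      · omega

lemma tm_even (i : ℕ) : tm (2 * i) = tm i := by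
  match i with
  | 0 => rfl
  | k + 1 =>
    rw [show 2 * (k + 1) = (2 * k + 1) + 1 by ring, tm]
    have : (2 * k + 1 + 1) % 2 = 0 := by omega
    simp only [this, if_true, reduceIte]
    congr 1
    omega

lemma tm_odd (i : ℕ) : tm (2 * i + 1) = 1 - tm i := by
  rw [tm]
  have h1 : (2 * i + 1) % 2 ≠ 0 := by omega
  have h2 : (2 * i + 1) / 2 = i := by omega
  simp [h1, h2]

lemma tm_flip : ∀ n : ℕ, ∀ i < 2 ^ n, tm (2 ^ n + i) = 1 - tm i := by
  intro n
  induction n with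
  | zero =>
    intro i hi
    interval_cases i
    simp [tm_one, tm_zero]
  | succ n ih =>
    intro i hi
    rcases Nat.even_or_odd i with ⟨j, hj⟩ | ⟨j, hj⟩
    · subst hj
      have hj' : j < 2 ^ n := by
        have := Nat.pow_succ 2 n ▸ hi; omega
      rw [show 2 ^ (n + 1) + (j + j) = 2 * (2 ^ n + j) by ring, tm_even,
        ih j hj', show j + j = 2 * j by ring, tm_even]
    · subst hj
      have hj' : j < 2 ^ n := by
        have := Nat.pow_succ 2 n ▸ hi; omega
      rw [show 2 ^ (n + 1) + (2 * j + 1) = 2 * (2 ^ n + j) + 1 by ring, tm_odd,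
        ih j hj', tm_odd]

lemma tm_pow (n : ℕ) : tm (2 ^ n) = 1 := by
  induction n with
  | zero => exact tm_one
  | succ n ih => rw [pow_succ, mul_comm, tm_even, ih]

lemma lam_flip (n i : ℕ) (h1 : 1 ≤ i) (h2 : i < 2 ^ n) :
    lam (2 ^ n + i) = -lam i := by
  unfold lam
  have e1 : tm (2 ^ n + i) = 1 - tm i := tm_flip n i h2
  have e2 : 2 ^ n + i - 1 = 2 ^ n + (i - 1) := by omega
  have e3 : tm (2 ^ n + (i - 1)) = 1 - tm (i - 1) := tm_flip n (i - 1) (by omega)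
  have l1 := tm_le_one i
  have l2 := tm_le_one (i - 1)
  rw [e1, e2, e3]
  push_cast [Nat.cast_sub l1, Nat.cast_sub l2]
  ring

lemma lam_pow (n : ℕ) : lam (2 ^ (n + 1)) = 1 - lam (2 ^ n) := by
  unfold lam
  have hp : 1 ≤ 2 ^ n := Nat.one_le_two_pow
  have e1 : 2 ^ (n + 1) - 1 = 2 ^ n + (2 ^ n - 1) := by
    have : 2 ^ (n + 1) = 2 ^ n + 2 ^ n := by rw [pow_succ]; ring
    omega
  have e2 : tm (2 ^ n + (2 ^ n - 1)) = 1 - tm (2 ^ n - 1) :=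
    tm_flip n _ (by omega)
  have l1 := tm_le_one (2 ^ n - 1)
  rw [e1, e2, tm_pow, tm_pow]
  push_cast [Nat.cast_sub l1]
  ring

theorem stmt6 :
    eps 0 = [1] ∧ ∀ n : ℕ, eps (n + 1) = eps n ++ plusOne (reflect (eps n)) := by
  have heps0 : eps 0 = [1] := by
    have h1 : List.range 1 = [0] := rfl
    simp [eps, lam, h1, tm_one, tm_zero]
  refine ⟨heps0, fun n => ?_⟩
  have hm : 1 ≤ 2 ^ n := Nat.one_le_two_pow
  have hrange : List.range (2 ^ (n + 1)) =
      List.range (2 ^ n) ++ (List.range (2 ^ n)).map (2 ^ n + ·) := by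
    rw [show 2 ^ (n + 1) = 2 ^ n + 2 ^ n by rw [pow_succ]; ring, List.range_add]
  have hwlen : (reflect (eps n)).length = 2 ^ n := by simp [reflect, eps]
  have hplen : (plusOne (reflect (eps n))).length = 2 ^ n := by
    simp [plusOne, hwlen]
    omega
  rw [eps, hrange, List.map_append]
  congr 1
  apply List.ext_getElem
  · simp [hplen]
  intro i h1 h2
  have hi : i < 2 ^ n := by simpa using h1
  simp only [List.getElem_map, List.getElem_range]
  have hdrop : (reflect (eps n)).dropLast.length = 2 ^ n - 1 := by
    simp [hwlen]
  by_cases hc : i < 2 ^ n - 1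
  · simp only [plusOne]
    rw [List.getElem_append_left (by rw [hdrop]; exact hc),
      List.getElem_dropLast]
    have : (reflect (eps n))[i]'(by omega) = -lam (i + 1) := by
      simp [reflect, eps]
    rw [this, show 2 ^ n + i + 1 = 2 ^ n + (i + 1) from by ring,
      lam_flip n (i + 1) (by omega) (by omega)]
  · have hie : i = 2 ^ n - 1 := by omega
    subst hie
    simp only [plusOne]
    rw [List.getElem_append_right (by rw [hdrop])]
    simp only [hdrop, Nat.sub_self, List.getElem_singleton]
    have hlast : (reflect (eps n)).getLast?.getD 0 = -lam (2 ^ n) := by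
      rw [List.getLast?_eq_getElem?, hwlen,
        List.getElem?_eq_getElem (by omega)]
      simp [reflect, eps, Nat.sub_add_cancel hm]
    rw [hlast, show 2 ^ n + (2 ^ n - 1) + 1 = 2 ^ (n + 1) from by
      rw [pow_succ]; omega, lam_pow]
    ring

end
end

section
/- Let n≥3. Then for every 0<i<2^{n+1} there exists u with 0<u<2^{n+2} and u≠2^{n+1} such that the u-th term of the sequence (σ^i((ε_n 𝜀̄_n)^∞),(ε_n (𝜀̄_n)^+ 𝜀̄_n (ε_n)^−)^∞) belongs to {(1,1),(−1,−1)}. -/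
open scoped Pointwise ENNReal
open Filter

noncomputable section

/-! The first sequence `(ε_n ε̄_n)^∞` has period `2^(n+1)` and is `±1` at every even index,
because `λ_{2k+1} = 1 - 2τ_k`. The second one starts with `ε_n`, so it equals `λ_1 = λ_4 = 1`
at the indices `0` and `3`, and it equals `-1` at `2^(n+1)` and `2^(n+1) + 3`, where `ε̄_n`
begins. Pick the index `j ∈ {0, 3}` with `j + i` even; the first sequence at `j + i` is `±1`,
and the sign decides between `u = j + 1` and `u = j + 1 + 2^(n+1)`. -/

lemma tm_two_mul (k : ℕ) : tm (2 * k) = tm k := by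
  rcases k.eq_zero_or_pos with rfl | hk
  · rfl
  · rw [show 2 * k = (2 * k - 1) + 1 by omega, tm, if_pos (by omega),
      show (2 * k - 1 + 1) / 2 = k by omega]

lemma tm_two_mul_add_one (k : ℕ) : tm (2 * k + 1) = 1 - tm k := by
  rw [tm, if_neg (by omega), show (2 * k + 1) / 2 = k by omega]

lemma tm_le_one_s10 (k : ℕ) : tm k ≤ 1 := by
  induction k using Nat.strong_induction_on with
  | _ k ih =>
    obtain ⟨m, rfl | rfl⟩ := k.even_or_odd'
    · rcases m.eq_zero_or_pos with rfl | hm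
      · simp [tm]
      · rw [tm_two_mul]; exact ih m (by omega)
    · rw [tm_two_mul_add_one]; omega

lemma lam_two_mul_add_one (k : ℕ) : lam (2 * k + 1) = 1 ∨ lam (2 * k + 1) = -1 := by
  have := tm_le_one_s10 k
  rw [lam, Nat.add_sub_cancel, tm_two_mul_add_one, tm_two_mul]
  omega

lemma eps_length (n : ℕ) : (eps n).length = 2 ^ n := by simp [eps]

lemma eps_getD {n m : ℕ} (hm : m < 2 ^ n) : (eps n).getD m 0 = lam (m + 1) := by
  simp [eps, hm]

lemma reflect_length (w : List ℤ) : (reflect w).length = w.length := List.length_map _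

lemma reflect_getD {w : List ℤ} {m : ℕ} (hm : m < w.length) :
    (reflect w).getD m 0 = -w.getD m 0 := by
  simp [reflect, hm]

lemma plusOne_length {w : List ℤ} (hw : w ≠ []) : (plusOne w).length = w.length := by
  have := List.length_pos_iff.mpr hw
  simp only [plusOne, List.length_append, List.length_dropLast, List.length_singleton]
  omega

lemma per_add_length (w : List ℤ) (j : ℕ) : per w (j + w.length) = per w j := by
  simp [per]

lemma per_append_reflect (w : List ℤ) (j : ℕ) :
    per (w ++ reflect w) j = (-1) ^ (j / w.length) * w.getD (j % w.length) 0 := by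
  rcases eq_or_ne w [] with rfl | hw
  · simp [per, reflect]
  have hL := List.length_pos_iff.mpr hw
  have hmod : j % (w.length * 2) = j % w.length + w.length * (j / w.length % 2) := Nat.mod_mul
  rw [per, List.length_append, reflect_length, ← two_mul, mul_comm, hmod]
  rcases Nat.mod_two_eq_zero_or_one (j / w.length) with h | h
  · rw [h, mul_zero, add_zero, List.getD_append _ _ _ _ (Nat.mod_lt _ hL),
      (Nat.even_iff.mpr h).neg_one_pow, one_mul]
  · rw [h, mul_one, List.getD_append_right _ _ _ _ (by omega), Nat.add_sub_cancel,
      reflect_getD (Nat.mod_lt _ hL), (Nat.odd_iff.mpr h).neg_one_pow, neg_one_mul]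

lemma per_eps_append_reflect_of_even {n j : ℕ} (hj : Even j) :
    per (eps n ++ reflect (eps n)) j = 1 ∨ per (eps n ++ reflect (eps n)) j = -1 := by
  have hdigit : j % 2 ^ n = 2 * (j % 2 ^ n / 2) := by
    rcases eq_or_ne n 0 with rfl | hn
    · simp [Nat.mod_one]
    have : j % 2 ^ n % 2 = 0 := by
      rw [Nat.mod_mod_of_dvd _ (dvd_pow_self 2 hn)]; exact Nat.even_iff.mp hj
    omega
  rw [per_append_reflect, eps_length, eps_getD (Nat.mod_lt _ (by positivity)), hdigit]
  rcases neg_one_pow_eq_or ℤ (j / 2 ^ n) with h | h <;>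
    rcases lam_two_mul_add_one (j % 2 ^ n / 2) with h' | h' <;> simp [h, h']

lemma length_eps_append_plusOne (n : ℕ) :
    (eps n ++ plusOne (reflect (eps n))).length = 2 * 2 ^ n := by
  have hne : reflect (eps n) ≠ [] := by
    rw [← List.length_pos_iff, reflect_length, eps_length]; positivity
  rw [List.length_append, plusOne_length hne, reflect_length, eps_length, two_mul]

lemma per_eps_plusOne_minusOne_of_lt {n j : ℕ} (hj : j < 3 * 2 ^ n) :
    per (eps n ++ plusOne (reflect (eps n)) ++ reflect (eps n) ++ minusOne (eps n)) j
      = (eps n ++ plusOne (reflect (eps n)) ++ reflect (eps n)).getD j 0 := by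
  have hlen : (eps n ++ plusOne (reflect (eps n)) ++ reflect (eps n)).length = 3 * 2 ^ n := by
    rw [List.length_append, length_eps_append_plusOne, reflect_length, eps_length]; ring
  rw [per, List.length_append, hlen, Nat.mod_eq_of_lt (by omega),
    List.getD_append _ _ _ _ (by omega)]

lemma per_eps_plusOne_minusOne_of_lt_two_pow {n j : ℕ} (hj : j < 2 ^ n) :
    per (eps n ++ plusOne (reflect (eps n)) ++ reflect (eps n) ++ minusOne (eps n)) j
      = lam (j + 1) := by
  rw [per_eps_plusOne_minusOne_of_lt (by omega),
    List.getD_append _ _ _ _ (by rw [length_eps_append_plusOne]; omega),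
    List.getD_append _ _ _ _ (by rw [eps_length]; omega), eps_getD hj]

lemma per_eps_plusOne_minusOne_add_two_pow_succ {n j : ℕ} (hj : j < 2 ^ n) :
    per (eps n ++ plusOne (reflect (eps n)) ++ reflect (eps n) ++ minusOne (eps n))
      (j + 2 ^ (n + 1)) = -lam (j + 1) := by
  rw [pow_succ, per_eps_plusOne_minusOne_of_lt (by omega),
    List.getD_append_right _ _ _ _ (by rw [length_eps_append_plusOne]; omega),
    length_eps_append_plusOne, show j + 2 ^ n * 2 - 2 * 2 ^ n = j by ring_nf; omega,
    reflect_getD (by rw [eps_length]; omega), eps_getD hj]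

lemma exists_lt_four_lam_eq_one_even_add (i : ℕ) : ∃ j < 4, lam (j + 1) = 1 ∧ Even (j + i) := by
  rcases Nat.even_or_odd i with hi | hi
  · exact ⟨0, by norm_num, by simp [lam, tm], by simpa using hi⟩
  · exact ⟨3, by norm_num, by simp [lam, tm], (by decide : Odd 3).add_odd hi⟩

theorem stmt10_general (n : ℕ) (hn : 3 ≤ n) (i : ℕ) :
    ∃ u, 0 < u ∧ u < 2 ^ (n + 2) ∧ u ≠ 2 ^ (n + 1) ∧
      (per (eps n ++ reflect (eps n)) ((u - 1) + i),
        per (eps n ++ plusOne (reflect (eps n)) ++ reflect (eps n) ++ minusOne (eps n))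
          (u - 1)) ∈ ({(1, 1), (-1, -1)} : Set (ℤ × ℤ)) := by
  obtain ⟨j, hj4, hlam, hji⟩ := exists_lt_four_lam_eq_one_even_add i
  have h8 : 8 ≤ 2 ^ n := (Nat.pow_le_pow_right two_pos hn).trans' (by norm_num)
  have hjn : j < 2 ^ n := by omega
  have hperiod : (eps n ++ reflect (eps n)).length = 2 ^ (n + 1) := by
    rw [List.length_append, reflect_length, eps_length, pow_succ, mul_two]
  rcases per_eps_append_reflect_of_even hji with hx | hx
  · refine ⟨j + 1, by omega, by rw [pow_succ, pow_succ]; omega, by rw [pow_succ]; omega, ?_⟩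
    rw [Nat.add_sub_cancel, hx, per_eps_plusOne_minusOne_of_lt_two_pow hjn, hlam]
    simp
  · refine ⟨j + 2 ^ (n + 1) + 1, by omega, by rw [pow_succ, pow_succ]; omega, by omega, ?_⟩
    rw [Nat.add_sub_cancel, add_right_comm, ← hperiod, per_add_length, hperiod,
      per_eps_plusOne_minusOne_add_two_pow_succ hjn]
    simp [hx, hlam]

theorem stmt10 (n : ℕ) (hn : 3 ≤ n) (i : ℕ) (hi0 : 0 < i) (hi1 : i < 2 ^ (n + 1)) :
    ∃ u, 0 < u ∧ u < 2 ^ (n + 2) ∧ u ≠ 2 ^ (n + 1) ∧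
      (per (eps n ++ reflect (eps n)) ((u - 1) + i),
        per (eps n ++ plusOne (reflect (eps n)) ++ reflect (eps n) ++ minusOne (eps n))
          (u - 1)) ∈ ({(1, 1), (-1, -1)} : Set (ℤ × ℤ)) :=
  stmt10_general n hn i

end
end
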